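/- Let Σ_X be a Fano fan of dimension n refining a smooth complete fan Σ_Y (corresponding to an equivariant birational morphism f : X → Y), let x ∈ G(Σ_X), and let η ∈ Σ_Y be the cone of dimension k whose relative interior contains x, so that f maps the irreducible invariant divisor E = V(x) ⊂ X onto the invariant subvariety A = V(η) ⊂ Y. Then ρ_Y − ρ_A ≤ 3, where ρ_Y = #G(Σ_Y) − n and ρ_A = #{(k+1)-dimensional cones of Σ_Y containing η} − (n − k). -/

import Mathlib

open Finset

namespace ToricFano

/-- The lattice `N ≅ ℤⁿ`. -/
abbrev NZ (n : ℕ) := Fin n → ℤ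
/-- The rational vector space `N_ℚ ≅ ℚⁿ`. -/
abbrev NQ (n : ℕ) := Fin n → ℚ

/-- The canonical map `N → N_ℚ`. -/
def toQ {n : ℕ} (v : NZ n) : NQ n := fun i => (v i : ℚ)

/-- The cone (set of nonnegative rational combinations) spanned by a finite set of
lattice points. -/
def coneSpan {n : ℕ} (s : Finset (NZ n)) : Set (NQ n) :=
  { p | ∃ c : NZ n → ℚ, (∀ v, 0 ≤ c v) ∧ p = ∑ v ∈ s, c v • toQ v }

/-- The relative interior of the cone spanned by a finite set of lattice points. -/
def relInt {n : ℕ} (s : Finset (NZ n)) : Set (NQ n) :=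
  { p | ∃ c : NZ n → ℚ, (∀ v ∈ s, 0 < c v) ∧ p = ∑ v ∈ s, c v • toQ v }

/-- A smooth complete fan of dimension `n`, encoded combinatorially: a cone is recorded
as the finite set of the primitive generators of its rays. -/
structure Fan (n : ℕ) where
  gens : Finset (NZ n)
  cones : Finset (Finset (NZ n))
  empty_mem : ∅ ∈ cones
  cones_subset : ∀ σ ∈ cones, σ ⊆ gens
  gens_mem : ∀ x ∈ gens, ({x} : Finset (NZ n)) ∈ cones
  downward : ∀ σ ∈ cones, ∀ τ ⊆ σ, τ ∈ cones
  smooth : ∀ σ ∈ cones, ∃ B : Module.Basis (Fin n) ℤ (NZ n), (σ : Set (NZ n)) ⊆ Set.range B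
  inter : ∀ σ ∈ cones, ∀ τ ∈ cones, coneSpan σ ∩ coneSpan τ = coneSpan (σ ∩ τ)
  complete : ∀ p : NQ n, ∃ σ ∈ cones, p ∈ coneSpan σ

/-- `P` is a primitive collection: a set of generators not spanning a cone, every proper
subset of which spans a cone. -/
def IsPrimColl {n : ℕ} (F : Fan n) (P : Finset (NZ n)) : Prop :=
  P ⊆ F.gens ∧ P ∉ F.cones ∧ ∀ Q ⊂ P, Q ∈ F.cones

/-- The primitive relation of the primitive collection `P`: `σ` is the unique cone of the
fan whose relative interior contains `∑ P`, and `a` records the (positive) coefficients,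
so that `∑_{v∈P} v = ∑_{v∈σ} a v • v`. -/
def IsPrimRel {n : ℕ} (F : Fan n) (P σ : Finset (NZ n)) (a : NZ n → ℕ) : Prop :=
  IsPrimColl F P ∧ σ ∈ F.cones ∧ (∀ v, v ∉ σ → a v = 0) ∧ (∀ v ∈ σ, 0 < a v) ∧
    ∑ v ∈ P, v = ∑ v ∈ σ, (a v : ℤ) • v

/-- The degree of the primitive relation with collection `P`, cone `σ`, coefficients `a`. -/
def prDegree {n : ℕ} (P σ : Finset (NZ n)) (a : NZ n → ℕ) : ℤ :=
  (P.card : ℤ) - ∑ v ∈ σ, (a v : ℤ)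

/-- A complete smooth fan is Fano when the convex hull of the generators is a polytope
with vertex set exactly the generators whose face fan is the fan itself: equivalently,
for each maximal cone the linear functional taking value `1` on its generators takes
values `< 1` on all other generators. -/
def IsFano {n : ℕ} (F : Fan n) : Prop :=
  ∀ σ ∈ F.cones, σ.card = n →
    ∃ u : NQ n →ₗ[ℚ] ℚ, (∀ v ∈ σ, u (toQ v) = 1) ∧
      ∀ z ∈ F.gens, z ∉ σ → u (toQ z) < 1

/-- An integral/rational relation among the generators, i.e. an element of `A₁(Σ) ⊗ ℚ`. -/
def IsRel {n : ℕ} (F : Fan n) (r : NZ n → ℚ) : Prop :=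
  (∀ v, v ∉ F.gens → r v = 0) ∧ ∑ v ∈ F.gens, r v • toQ v = 0

/-- The relation attached to a wall (an `(n-1)`-dimensional cone) of the fan. -/
def IsWallRel {n : ℕ} (F : Fan n) (r : NZ n → ℚ) : Prop :=
  ∃ ω ∈ F.cones, ω.card = n - 1 ∧ ∃ u u' : NZ n, u ≠ u' ∧ u ∉ ω ∧ u' ∉ ω ∧
    insert u ω ∈ F.cones ∧ insert u' ω ∈ F.cones ∧ IsRel F r ∧
    r u = 1 ∧ r u' = 1 ∧ ∀ v, v ∉ insert u (insert u' ω) → r v = 0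

/-- The Mori cone `NE(Σ)`: the convex cone generated by the wall relations. -/
def NECone {n : ℕ} (F : Fan n) : Set (NZ n → ℚ) :=
  { r | ∃ (k : ℕ) (c : Fin k → ℚ) (w : Fin k → (NZ n → ℚ)),
      (∀ i, 0 ≤ c i) ∧ (∀ i, IsWallRel F (w i)) ∧ r = ∑ i, c i • w i }

/-- A class is extremal if it spans a one-dimensional face of `NE(Σ)`. -/
def IsExtremal {n : ℕ} (F : Fan n) (r : NZ n → ℚ) : Prop :=
  r ∈ NECone F ∧ ∀ s ∈ NECone F, ∀ t ∈ NECone F, r = s + t →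
    (∃ c : ℚ, 0 ≤ c ∧ s = c • r) ∧ ∃ c : ℚ, 0 ≤ c ∧ t = c • r

/-- The numerical class associated to the primitive relation with collection `P` and
coefficients `a` (1 on the elements of `P`, `-a` on the right-hand side). -/
def primRelClass {n : ℕ} (P : Finset (NZ n)) (a : NZ n → ℕ) : NZ n → ℚ :=
  fun v => (if v ∈ P then (1 : ℚ) else 0) - (a v : ℚ)

/-- `FX` refines `FY`: every cone of `FY` is a union of cones of `FX`. -/
def Refines {n : ℕ} (FX FY : Fan n) : Prop :=
  ∀ τ ∈ FY.cones, ∃ S : Finset (Finset (NZ n)), S ⊆ FX.cones ∧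
    coneSpan τ = ⋃ σ ∈ S, coneSpan σ

/-- The combinatorial star subdivision at `τ` of a collection of (smooth simplicial)
cones: insert the new ray through `∑ τ` and subdivide every cone containing `τ`. -/
def starSubCones {n : ℕ} (D : Finset (Finset (NZ n))) (τ : Finset (NZ n)) :
    Finset (Finset (NZ n)) :=
  D.filter (fun σ => ¬ τ ⊆ σ) ∪
    (D.filter (fun μ => ¬ τ ⊆ μ ∧ μ ∪ τ ∈ D)).image (insert (∑ v ∈ τ, v))

/-- `F'` is the star subdivision of `F` at a cone of dimension at least 2;
it corresponds to the blow-up of the toric variety along an invariant subvariety. -/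
def IsStarSubFan {n : ℕ} (F' F : Fan n) : Prop :=
  ∃ τ ∈ F.cones, 2 ≤ τ.card ∧
    F'.gens = insert (∑ v ∈ τ, v) F.gens ∧
    F'.cones = starSubCones F.cones τ

/-- Projectivity of a complete fan: existence of a strictly convex support function,
linear on each maximal cone. -/
def IsProjective {n : ℕ} (F : Fan n) : Prop :=
  ∃ φ : NQ n → ℚ, ∀ σ ∈ F.cones, σ.card = n →
    ∃ u : NQ n →ₗ[ℚ] ℚ, (∀ p ∈ coneSpan σ, φ p = u p) ∧
      ∀ p, p ∉ coneSpan σ → φ p < u p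

/-- A primitive relation is contractible if the fan has Reid's wall-geometry around it
(equivalently, the class admits an equivariant contraction). -/
def IsContractible {n : ℕ} (F : Fan n) (P σ : Finset (NZ n)) (a : NZ n → ℕ) : Prop :=
  IsPrimRel F P σ a ∧
    ∀ ν ∈ F.cones, (σ ∪ ν) ∈ F.cones → (∀ z ∈ ν, z ∉ P ∧ z ∉ σ) →
      ∀ x ∈ P, ((P.erase x) ∪ σ ∪ ν) ∈ F.cones

end ToricFano

/-!
`ρ_Y - ρ_A` counts the generators `y ∉ η` of `Σ_Y` for which `η ∪ {y}` is not a cone. Each such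
`y` is a generator of `Σ_X` with `{x, y}` not a cone of `Σ_X`, since a cone of `Σ_X` containing
`x` and `y` lies in a cone of `Σ_Y` containing `η` and `y`. In a Fano fan the primitive relation
of such a pair has positive degree, so `x + y` is `0` or a generator; the first case occurs for at
most one `y`. The Fano condition also makes `{a, a + b}` a cone whenever `a`, `b`, `a + b` are
generators, and forces two generators with the same sum as a two-dimensional cone `{c, d}` to
meet `{c, d}`. Applied to the sums `x + y₁ + y₂` and `2x + y₁ + y₂`, this gives
`y₁ + y₂ ∈ {-x, -2x}` for any two `y₁ ≠ y₂` of the second kind, so there are at most two of them: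
three would have three distinct pairwise sums.
-/

namespace ToricFano

open Filter Topology

section

variable {n : ℕ}

def toQLinear (n : ℕ) : NZ n →ₗ[ℤ] NQ n where
  toFun := toQ
  map_add' a b := by funext i; simp [toQ]
  map_smul' k a := by funext i; simp [toQ]

lemma toQLinear_apply (v : NZ n) : toQLinear n v = toQ v := rfl

lemma toQ_add (a b : NZ n) : toQ (a + b) = toQ a + toQ b := map_add (toQLinear n) a b

lemma toQ_zero : toQ (0 : NZ n) = 0 := map_zero (toQLinear n)

lemma toQ_injective : Function.Injective (toQ : NZ n → NQ n) := fun a b h => by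
  funext i; simpa [toQ] using congrFun h i

lemma sum_smul_toQ_mem_coneSpan {s : Finset (NZ n)} {c : NZ n → ℚ} (hc : ∀ v ∈ s, 0 ≤ c v) :
    ∑ v ∈ s, c v • toQ v ∈ coneSpan s := by
  classical
  refine ⟨fun v => if v ∈ s then c v else 0, fun v => ?_, Finset.sum_congr rfl fun v hv => ?_⟩
  · dsimp only
    split_ifs with hv
    exacts [hc v hv, le_rfl]
  · simp [hv]

lemma toQ_mem_coneSpan {s : Finset (NZ n)} {v : NZ n} (hv : v ∈ s) : toQ v ∈ coneSpan s := by
  classical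
  simpa [Finset.sum_ite_eq', hv] using
    sum_smul_toQ_mem_coneSpan (s := s) (c := fun u => if u = v then 1 else 0)
      (fun u _ => by positivity)

lemma coneSpan_mono {s t : Finset (NZ n)} (h : s ⊆ t) : coneSpan s ⊆ coneSpan t := by
  classical
  rintro _ ⟨c, hc, rfl⟩
  have h' := sum_smul_toQ_mem_coneSpan (s := t) (c := fun v => if v ∈ s then c v else 0)
    fun v _ => by split_ifs <;> simp [hc v]
  simp_rw [ite_smul, zero_smul, Finset.sum_ite_mem, Finset.inter_eq_right.2 h] at h'
  exact h'

lemma relInt_subset_coneSpan (s : Finset (NZ n)) : relInt s ⊆ coneSpan s := by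
  rintro _ ⟨c, hc, rfl⟩
  exact sum_smul_toQ_mem_coneSpan fun v hv => (hc v hv).le

lemma coneSpan_subset_span (s : Finset (NZ n)) :
    coneSpan s ⊆ Submodule.span ℚ (toQ '' (s : Set (NZ n))) := by
  rintro _ ⟨c, -, rfl⟩
  exact Submodule.sum_mem _ fun v hv => Submodule.smul_mem _ _ (Submodule.subset_span ⟨v, hv, rfl⟩)

lemma toQ_add_mem_relInt_pair (a b : NZ n) : toQ (a + b) ∈ relInt ({a, b} : Finset (NZ n)) := by
  by_cases hab : a = b
  · subst hab
    refine ⟨fun _ => 2, fun _ _ => two_pos, ?_⟩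
    rw [Finset.pair_eq_singleton, Finset.sum_singleton, toQ_add, two_smul]
  · exact ⟨fun _ => 1, fun _ _ => one_pos, by simp [Finset.sum_pair hab, toQ_add]⟩

lemma linearIndependent_toQ_comp (B : Module.Basis (Fin n) ℤ (NZ n)) :
    LinearIndependent ℚ (toQ ∘ B) :=
  (LinearIndependent.iff_fractionRing ℤ ℚ).1 <|
    B.linearIndependent.map' (toQLinear n) (LinearMap.ker_eq_bot.2 toQ_injective)

noncomputable def ratBasis (B : Module.Basis (Fin n) ℤ (NZ n)) : Module.Basis (Fin n) ℚ (NQ n) :=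
  basisOfLinearIndependentOfCardEqFinrank' _ (linearIndependent_toQ_comp B) (by simp)

lemma ratBasis_apply (B : Module.Basis (Fin n) ℤ (NZ n)) (i : Fin n) :
    ratBasis B i = toQ (B i) := by
  simp [ratBasis]

lemma ratBasis_repr_toQ (B : Module.Basis (Fin n) ℤ (NZ n)) (m : NZ n) (i : Fin n) :
    (ratBasis B).repr (toQ m) i = B.repr m i := by
  have hm : toQ m = ∑ j, ((B.repr m j : ℤ) : ℚ) • ratBasis B j := by
    conv_lhs => rw [← B.sum_repr m, ← toQLinear_apply, map_sum]
    refine Finset.sum_congr rfl fun j _ => ?_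
    rw [map_zsmul, ratBasis_apply, Int.cast_smul_eq_zsmul, toQLinear_apply]
  rw [hm, Module.Basis.repr_sum_self]

theorem Fan.exists_coord (F : Fan n) {σ : Finset (NZ n)} (hσ : σ ∈ F.cones) :
    ∃ L : NZ n → Module.Dual ℚ (NQ n),
      (∀ v ∈ σ, ∀ u ∈ σ, L v (toQ u) = if u = v then 1 else 0) ∧
      (∀ v ∈ σ, ∀ m : NZ n, ∃ k : ℤ, L v (toQ m) = k) ∧
      (σ.card = n → ∀ p, ∑ v ∈ σ, L v p • toQ v = p) := by
  classical
  obtain ⟨B, hB⟩ := F.smooth σ hσ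
  refine ⟨Function.extend B (ratBasis B).coord 0, ?_, ?_, ?_⟩
  · intro v hv u hu
    obtain ⟨i, rfl⟩ := hB hv
    obtain ⟨j, rfl⟩ := hB hu
    rw [B.injective.extend_apply, ← ratBasis_apply, Module.Basis.coord_apply,
      Module.Basis.repr_self]
    simp [Finsupp.single_apply, B.injective.eq_iff, eq_comm]
  · intro v hv m
    obtain ⟨i, rfl⟩ := hB hv
    exact ⟨B.repr m i, by
      rw [B.injective.extend_apply, Module.Basis.coord_apply, ratBasis_repr_toQ]⟩
  · intro hcard p
    have hσB : σ = Finset.univ.image B :=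
      Finset.eq_of_subset_of_card_le (fun v hv => by obtain ⟨i, rfl⟩ := hB hv; simp)
        (by rw [Finset.card_image_of_injective _ B.injective]; simp [hcard])
    rw [hσB, Finset.sum_image B.injective.injOn]
    simp_rw [B.injective.extend_apply, ← ratBasis_apply, Module.Basis.coord_apply]
    exact (ratBasis B).sum_repr p

section Coord

variable {σ : Finset (NZ n)} {L : NZ n → Module.Dual ℚ (NQ n)}

lemma coord_sum_smul_toQ (hL : ∀ v ∈ σ, ∀ u ∈ σ, L v (toQ u) = if u = v then 1 else 0)
    (c : NZ n → ℚ) {v : NZ n} (hv : v ∈ σ) : L v (∑ u ∈ σ, c u • toQ u) = c v := by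
  rw [map_sum, Finset.sum_congr rfl fun u hu => by rw [map_smul, hL v hv u hu]]
  simp [hv]

lemma coord_nonneg_of_mem_coneSpan
    (hL : ∀ v ∈ σ, ∀ u ∈ σ, L v (toQ u) = if u = v then 1 else 0)
    {p : NQ n} (hp : p ∈ coneSpan σ) {v : NZ n} (hv : v ∈ σ) : 0 ≤ L v p := by
  obtain ⟨c, hc, rfl⟩ := hp
  rw [coord_sum_smul_toQ hL c hv]
  exact hc v

lemma apply_eq_sum_coord {τ : Finset (NZ n)} {L : NZ n → Module.Dual ℚ (NQ n)}
    (hspan : ∀ p, ∑ v ∈ τ, L v p • toQ v = p) {u : NQ n →ₗ[ℚ] ℚ}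
    (hu : ∀ v ∈ τ, u (toQ v) = 1) (p : NQ n) : u p = ∑ v ∈ τ, L v p := by
  conv_lhs => rw [← hspan p]
  rw [map_sum]
  exact Finset.sum_congr rfl fun v hv => by rw [map_smul, hu v hv, smul_eq_mul, mul_one]

end Coord

namespace Fan

variable (F : Fan n)

theorem subset_of_mem_relInt {σ τ : Finset (NZ n)} (hσ : σ ∈ F.cones) (hτ : τ ∈ F.cones)
    {p : NQ n} (hp : p ∈ relInt σ) (hpτ : p ∈ coneSpan τ) : σ ⊆ τ := by
  classical
  obtain ⟨d, -, hd⟩ : p ∈ coneSpan (σ ∩ τ) := by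
    rw [← F.inter σ hσ τ hτ]
    exact ⟨relInt_subset_coneSpan σ hp, hpτ⟩
  obtain ⟨c, hc, rfl⟩ := hp
  obtain ⟨L, hL, -⟩ := F.exists_coord hσ
  replace hd : ∑ v ∈ σ, c v • toQ v = ∑ v ∈ σ, (if v ∈ τ then d v else 0) • toQ v := by
    rw [hd, ← Finset.sum_ite_mem]
    exact Finset.sum_congr rfl fun v _ => by split_ifs <;> simp
  intro v hv
  have hcv := coord_sum_smul_toQ hL c hv
  rw [hd, coord_sum_smul_toQ hL _ hv] at hcv
  by_contra hvτ
  rw [if_neg hvτ] at hcv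
  exact (hc v hv).ne hcv

theorem mem_of_toQ_mem_coneSpan {g : NZ n} (hg : g ∈ F.gens) {τ : Finset (NZ n)}
    (hτ : τ ∈ F.cones) (h : toQ g ∈ coneSpan τ) : g ∈ τ :=
  F.subset_of_mem_relInt (F.gens_mem g hg) hτ ⟨fun _ => 1, fun _ _ => one_pos, by simp⟩ h
    (Finset.mem_singleton_self g)

theorem ne_zero_of_mem_gens {g : NZ n} (hg : g ∈ F.gens) : g ≠ 0 := by
  obtain ⟨B, hB⟩ := F.smooth _ (F.gens_mem g hg)
  obtain ⟨i, rfl⟩ := hB (Finset.mem_coe.2 (Finset.mem_singleton_self g))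
  exact B.ne_zero i

theorem exists_int_of_toQ_eq_smul {g m : NZ n} (hg : g ∈ F.gens) {c : ℚ}
    (h : toQ m = c • toQ g) : ∃ k : ℤ, c = k := by
  obtain ⟨L, hL, hint, -⟩ := F.exists_coord (F.gens_mem g hg)
  obtain ⟨k, hk⟩ := hint g (Finset.mem_singleton_self g) m
  refine ⟨k, ?_⟩
  have := hL g (Finset.mem_singleton_self g) g (Finset.mem_singleton_self g)
  rw [← hk, h, map_smul, this, if_pos rfl, smul_eq_mul, mul_one]

theorem eq_of_toQ_eq_smul (F' : Fan n) {g g' : NZ n} (hg : g ∈ F.gens) (hg' : g' ∈ F'.gens)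
    {c : ℚ} (hc : 0 ≤ c) (h : toQ g = c • toQ g') : g = g' := by
  obtain ⟨k, rfl⟩ := F'.exists_int_of_toQ_eq_smul hg' h
  have hk : (k : ℚ) ≠ 0 := by
    rintro hk
    rw [hk, zero_smul, ← toQ_zero] at h
    exact F.ne_zero_of_mem_gens hg (toQ_injective h)
  obtain ⟨l, hl⟩ := F.exists_int_of_toQ_eq_smul (m := g') hg (c := (k : ℚ)⁻¹)
    (by rw [h, smul_smul, inv_mul_cancel₀ hk, one_smul])
  have hkl : k * l = 1 := by exact_mod_cast (hl ▸ mul_inv_cancel₀ hk : (k : ℚ) * l = 1)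
  rw [Int.eq_one_of_mul_eq_one_right (by exact_mod_cast hc) hkl, Int.cast_one, one_smul] at h
  exact toQ_injective h

theorem add_notMem_gens_of_pair_mem {a b : NZ n} (h : ({a, b} : Finset (NZ n)) ∈ F.cones) :
    a + b ∉ F.gens := fun hg => by
  have hsub := F.subset_of_mem_relInt h (F.gens_mem _ hg) (toQ_add_mem_relInt_pair a b)
    (toQ_mem_coneSpan (Finset.mem_singleton_self _))
  have ha : a = a + b := Finset.mem_singleton.1 (hsub (Finset.mem_insert_self a {b}))
  have hb : b ∈ F.gens :=
    F.cones_subset _ h (Finset.mem_insert_of_mem (Finset.mem_singleton_self b))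
  exact F.ne_zero_of_mem_gens hb (by simpa using ha)

theorem add_ne_zero_of_pair_mem {a b : NZ n} (h : ({a, b} : Finset (NZ n)) ∈ F.cones) :
    a + b ≠ 0 := fun h0 => by
  have h0' : toQ (a + b) ∈ coneSpan ∅ := by
    simpa [h0, toQ_zero] using sum_smul_toQ_mem_coneSpan (s := ∅) (c := 0) (by simp)
  simpa using F.subset_of_mem_relInt h F.empty_mem (toQ_add_mem_relInt_pair a b) h0'

theorem exists_frequently_mem_coneSpan (p q : NQ n) :
    ∃ σ ∈ F.cones, ∃ᶠ δ in 𝓝[>] (0 : ℚ), p + δ • q ∈ coneSpan σ := by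
  by_contra! h
  obtain ⟨δ, hδ⟩ := ((Filter.eventually_all_finset F.cones).2 h).exists
  obtain ⟨σ, hσ, hmem⟩ := F.complete (p + δ • q)
  exact hδ σ hσ hmem

theorem mem_coneSpan_of_frequently {τ : Finset (NZ n)} (hτ : τ ∈ F.cones) (hcard : τ.card = n)
    {p q : NQ n} (h : ∃ᶠ δ in 𝓝[>] (0 : ℚ), p + δ • q ∈ coneSpan τ) : p ∈ coneSpan τ := by
  obtain ⟨L, hL, -, hspan⟩ := F.exists_coord hτ
  rw [← hspan hcard p]
  refine sum_smul_toQ_mem_coneSpan fun v hv => ?_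
  have hfreq : ∃ᶠ δ in 𝓝 (0 : ℚ), δ ∈ {δ : ℚ | 0 ≤ L v p + δ * L v q} :=
    (h.filter_mono nhdsWithin_le_nhds).mono fun δ hδ => by
      simpa using coord_nonneg_of_mem_coneSpan hL hδ hv
  have hclosed : IsClosed {δ : ℚ | 0 ≤ L v p + δ * L v q} :=
    isClosed_le continuous_const (by fun_prop)
  simpa using hclosed.closure_subset (mem_closure_iff_frequently.2 hfreq)

theorem span_ne_top {σ : Finset (NZ n)} (hσ : σ ∈ F.cones) (hcard : σ.card ≠ n) :
    Submodule.span ℚ (toQ '' (σ : Set (NZ n))) ≠ ⊤ := by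
  classical
  obtain ⟨B, hB⟩ := F.smooth σ hσ
  have hli : LinearIndepOn ℚ id ((σ.image toQ : Finset (NQ n)) : Set (NQ n)) :=
    (ratBasis B).linearIndependent.linearIndepOn_id.mono fun _ hp => by
      obtain ⟨v, hv, rfl⟩ := Finset.mem_image.1 hp
      obtain ⟨i, rfl⟩ := hB hv
      exact ⟨i, ratBasis_apply B i⟩
  intro htop
  have hrank := finrank_span_finset_eq_card hli
  rw [Finset.coe_image, htop, finrank_top, Module.finrank_fintype_fun_eq_card, Fintype.card_fin,
    Finset.card_image_of_injective _ toQ_injective] at hrank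
  exact hcard hrank.symm

/-- Push a relative interior point of `σ` off in a direction `w` lying in none of the linear
spans of the non-maximal cones: only a maximal cone can contain points of the resulting ray
arbitrarily close to the start. -/
theorem exists_superset_card_eq {σ : Finset (NZ n)} (hσ : σ ∈ F.cones) :
    ∃ τ ∈ F.cones, τ.card = n ∧ σ ⊆ τ := by
  classical
  obtain ⟨w, hw⟩ := Submodule.exists_forall_notMem_of_forall_ne_top
    (fun τ : F.cones.filter (·.card ≠ n) => Submodule.span ℚ (toQ '' (τ.1 : Set (NZ n))))
    (fun τ => F.span_ne_top (Finset.mem_filter.1 τ.2).1 (Finset.mem_filter.1 τ.2).2)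
  have hp : ∑ v ∈ σ, (1 : ℚ) • toQ v ∈ relInt σ := ⟨fun _ => 1, fun _ _ => one_pos, rfl⟩
  obtain ⟨τ, hτ, hfreq⟩ := F.exists_frequently_mem_coneSpan (∑ v ∈ σ, (1 : ℚ) • toQ v) w
  have hcard : τ.card = n := by
    by_contra hne
    obtain ⟨δ₁, hδ₁, hδ₁pos⟩ := (hfreq.and_eventually self_mem_nhdsWithin).exists
    obtain ⟨δ₂, hδ₂, hδ₂lt⟩ := (hfreq.and_eventually
      ((eventually_lt_nhds hδ₁pos).filter_mono nhdsWithin_le_nhds)).exists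
    apply hw ⟨τ, Finset.mem_filter.2 ⟨hτ, hne⟩⟩
    have hsub := sub_mem (coneSpan_subset_span τ hδ₁) (coneSpan_subset_span τ hδ₂)
    rw [add_sub_add_left_eq_sub, ← sub_smul] at hsub
    exact (Submodule.smul_mem_iff _ (sub_ne_zero.2 hδ₂lt.ne')).1 hsub
  exact ⟨τ, hτ, hcard,
    F.subset_of_mem_relInt hσ hτ hp (F.mem_coneSpan_of_frequently hτ hcard hfreq)⟩

theorem exists_card_eq_frequently (p q : NQ n) :
    ∃ τ ∈ F.cones, τ.card = n ∧ p ∈ coneSpan τ ∧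
      ∃ᶠ δ in 𝓝[>] (0 : ℚ), p + δ • q ∈ coneSpan τ := by
  obtain ⟨σ, hσ, hfreq⟩ := F.exists_frequently_mem_coneSpan p q
  obtain ⟨τ, hτ, hcard, hστ⟩ := F.exists_superset_card_eq hσ
  have hfreq' := hfreq.mono fun δ hδ => coneSpan_mono hστ hδ
  exact ⟨τ, hτ, hcard, F.mem_coneSpan_of_frequently hτ hcard hfreq', hfreq'⟩

theorem exists_card_eq_mem_coneSpan (p : NQ n) :
    ∃ τ ∈ F.cones, τ.card = n ∧ p ∈ coneSpan τ := by
  obtain ⟨σ, hσ, hp⟩ := F.complete p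
  obtain ⟨τ, hτ, hcard, hστ⟩ := F.exists_superset_card_eq hσ
  exact ⟨τ, hτ, hcard, coneSpan_mono hστ hp⟩

theorem eq_zero_or_mem_of_apply_le_one {τ : Finset (NZ n)} (hτ : τ ∈ F.cones)
    (hcard : τ.card = n) {u : NQ n →ₗ[ℚ] ℚ} (hu : ∀ v ∈ τ, u (toQ v) = 1) {m : NZ n}
    (hm : toQ m ∈ coneSpan τ) (hum : u (toQ m) ≤ 1) : m = 0 ∨ m ∈ τ := by
  obtain ⟨L, hL, hint, hspan⟩ := F.exists_coord hτ
  have hnn : ∀ v ∈ τ, 0 ≤ L v (toQ m) := fun v hv => coord_nonneg_of_mem_coneSpan hL hm hv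
  rw [apply_eq_sum_coord (hspan hcard) hu] at hum
  by_cases hzero : ∀ v ∈ τ, L v (toQ m) = 0
  · left
    apply toQ_injective
    rw [← hspan hcard (toQ m), toQ_zero]
    exact Finset.sum_eq_zero fun v hv => by rw [hzero v hv, zero_smul]
  push Not at hzero
  obtain ⟨v₀, hv₀, hne⟩ := hzero
  have hone : 1 ≤ L v₀ (toQ m) := by
    obtain ⟨k, hk⟩ := hint v₀ hv₀ m
    have hk0 : (0 : ℚ) < k := hk ▸ (hnn v₀ hv₀).lt_of_ne' hne
    rw [hk]
    exact_mod_cast (show (0 : ℤ) < k by exact_mod_cast hk0)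
  rw [← Finset.add_sum_erase τ _ hv₀] at hum
  have hrest : ∀ v ∈ τ.erase v₀, L v (toQ m) = 0 :=
    (Finset.sum_eq_zero_iff_of_nonneg fun v hv => hnn v (Finset.mem_of_mem_erase hv)).1
      (le_antisymm (by linarith) (Finset.sum_nonneg fun v hv => hnn v (Finset.mem_of_mem_erase hv)))
  have hv₀m : L v₀ (toQ m) = 1 := by
    linarith [Finset.sum_eq_zero hrest]
  right
  convert hv₀
  apply toQ_injective
  rw [← hspan hcard (toQ m), ← Finset.add_sum_erase τ _ hv₀,
    Finset.sum_eq_zero fun v hv => by rw [hrest v hv, zero_smul], add_zero, hv₀m, one_smul]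

end Fan

namespace IsFano

variable {F : Fan n}

theorem exists_functional (hF : IsFano F) {τ : Finset (NZ n)} (hτ : τ ∈ F.cones)
    (hcard : τ.card = n) :
    ∃ u : NQ n →ₗ[ℚ] ℚ, (∀ v ∈ τ, u (toQ v) = 1) ∧ ∀ g ∈ F.gens, g ∉ τ → u (toQ g) ≤ 0 := by
  obtain ⟨u, hu1, hu2⟩ := hF τ hτ hcard
  obtain ⟨L, -, hint, hspan⟩ := F.exists_coord hτ
  refine ⟨u, hu1, fun g hg hgτ => ?_⟩
  choose! K hK using fun v hv => hint v hv g
  have hug : u (toQ g) = ((∑ v ∈ τ, K v : ℤ) : ℚ) := by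
    rw [apply_eq_sum_coord (hspan hcard) hu1, Int.cast_sum]
    exact Finset.sum_congr rfl hK
  have hlt := hu2 g hg hgτ
  rw [hug] at hlt ⊢
  exact_mod_cast Int.lt_add_one_iff.1 (by exact_mod_cast hlt : ∑ v ∈ τ, K v < 0 + 1)

theorem add_eq_zero_or_mem_gens (hF : IsFano F) {x y : NZ n} (hx : x ∈ F.gens)
    (hy : y ∈ F.gens) (hxy : ({x, y} : Finset (NZ n)) ∉ F.cones) : x + y = 0 ∨ x + y ∈ F.gens := by
  obtain ⟨τ, hτ, hcard, hm⟩ := F.exists_card_eq_mem_coneSpan (toQ (x + y))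
  obtain ⟨u, hu1, hu0⟩ := hF.exists_functional hτ hcard
  have hle : ∀ g ∈ F.gens, u (toQ g) ≤ 1 := fun g hg => by
    by_cases hgτ : g ∈ τ
    · exact (hu1 g hgτ).le
    · linarith [hu0 g hg hgτ]
  have hsum : u (toQ (x + y)) ≤ 1 := by
    rw [toQ_add, map_add]
    by_cases hxτ : x ∈ τ
    · have hyτ : y ∉ τ := fun hyτ =>
        hxy (F.downward τ hτ _ (Finset.insert_subset hxτ (Finset.singleton_subset_iff.2 hyτ)))
      linarith [hle x hx, hu0 y hy hyτ]
    · linarith [hu0 x hx hxτ, hle y hy]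
  exact (F.eq_zero_or_mem_of_apply_le_one hτ hcard hu1 hm hsum).imp_right (F.cones_subset τ hτ ·)

/-- Near `a + b` in the direction of `a`, the maximal cone containing `a + b`
cannot contain `b`, and then the Fano functional forces it to contain `a`. -/
theorem pair_mem_of_add_mem_gens (hF : IsFano F) {a b : NZ n} (ha : a ∈ F.gens)
    (hb : b ∈ F.gens) (hab : a + b ∈ F.gens) : ({a, a + b} : Finset (NZ n)) ∈ F.cones := by
  obtain ⟨τ, hτ, hcard, hc, hfreq⟩ := F.exists_card_eq_frequently (toQ (a + b)) (toQ a)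
  obtain ⟨u, hu1, hu0⟩ := hF.exists_functional hτ hcard
  have hcτ : a + b ∈ τ := F.mem_of_toQ_mem_coneSpan hab hτ hc
  have hbτ : b ∉ τ := by
    intro hbτ
    obtain ⟨L, hL, -⟩ := F.exists_coord hτ
    obtain ⟨δ, hδ, hδpos⟩ := (hfreq.and_eventually self_mem_nhdsWithin).exists
    have hcb : a + b ≠ b := fun h => F.ne_zero_of_mem_gens ha (by simpa using h)
    have hLa : L b (toQ a) = -1 := by
      have h := congrArg (L b) (toQ_add a b)
      rw [hL b hbτ _ hcτ, if_neg hcb, map_add, hL b hbτ b hbτ, if_pos rfl] at h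
      linarith
    have hδnn := coord_nonneg_of_mem_coneSpan hL hδ hbτ
    rw [map_add, map_smul, hL b hbτ _ hcτ, if_neg hcb, hLa, smul_eq_mul] at hδnn
    linarith [show (0 : ℚ) < δ from hδpos]
  have huab : u (toQ a) + u (toQ b) = 1 := by rw [← map_add, ← toQ_add, hu1 _ hcτ]
  have haτ : a ∈ τ := by
    by_contra haτ
    linarith [hu0 a ha haτ, hu0 b hb hbτ]
  exact F.downward τ hτ _ (Finset.insert_subset haτ (Finset.singleton_subset_iff.2 hcτ))

theorem mem_pair_of_add_eq_add (hF : IsFano F) {a b c d : NZ n} (ha : a ∈ F.gens)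
    (hb : b ∈ F.gens) (hcd : ({c, d} : Finset (NZ n)) ∈ F.cones) (h : a + b = c + d) :
    a = c ∨ a = d := by
  suffices a ∈ ({c, d} : Finset (NZ n)) by simpa using this
  by_cases hab : ({a, b} : Finset (NZ n)) ∈ F.cones
  · refine F.subset_of_mem_relInt hab hcd (toQ_add_mem_relInt_pair a b) ?_
      (Finset.mem_insert_self a {b})
    rw [h]
    exact relInt_subset_coneSpan _ (toQ_add_mem_relInt_pair c d)
  · rcases hF.add_eq_zero_or_mem_gens ha hb hab with h0 | hg
    · exact absurd (h ▸ h0) (F.add_ne_zero_of_pair_mem hcd)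
    · exact absurd (h ▸ hg) (F.add_notMem_gens_of_pair_mem hcd)

theorem add_eq_neg_or_eq_neg_two_nsmul (hF : IsFano F) {x y₁ y₂ : NZ n} (hx : x ∈ F.gens)
    (hy₁ : y₁ ∈ F.gens) (hy₂ : y₂ ∈ F.gens) (hz₁ : x + y₁ ∈ F.gens) (hz₂ : x + y₂ ∈ F.gens)
    (hne : y₁ ≠ y₂) : y₁ + y₂ = -x ∨ y₁ + y₂ = -(2 • x) := by
  have hs : x + y₁ + y₂ = 0 ∨ x + y₁ + y₂ ∈ F.gens := by
    by_cases hc : ({x + y₁, y₂} : Finset (NZ n)) ∈ F.cones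
    · rcases hF.mem_pair_of_add_eq_add hz₂ hy₁ hc (by abel) with h | h
      · exact absurd (add_left_cancel h).symm hne
      · exact absurd (by simpa using h) (F.ne_zero_of_mem_gens hx)
    · exact hF.add_eq_zero_or_mem_gens hz₁ hy₂ hc
  rcases hs with hs | hs
  · exact Or.inl (eq_neg_of_add_eq_zero_left (by rw [← hs]; abel))
  have hxs : ({x, x + y₁ + y₂} : Finset (NZ n)) ∉ F.cones := fun hc => by
    rcases hF.mem_pair_of_add_eq_add hz₁ hz₂ hc (by abel) with h | h
    · exact F.ne_zero_of_mem_gens hy₁ (by simpa using h)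
    · exact F.ne_zero_of_mem_gens hy₂ (by simpa using h)
  rcases hF.add_eq_zero_or_mem_gens hx hs hxs with h0 | hw
  · exact Or.inr (eq_neg_of_add_eq_zero_left (by rw [← h0]; abel))
  rcases hF.mem_pair_of_add_eq_add hy₁ hw (hF.pair_mem_of_add_mem_gens hz₁ hy₂ hs) (by abel)
    with h | h
  · exact absurd (by simpa using h) (F.ne_zero_of_mem_gens hx)
  · exact (F.ne_zero_of_mem_gens hz₂ (by linear_combination -h)).elim

theorem card_le_two (hF : IsFano F) {x : NZ n} (hx : x ∈ F.gens) {Y : Finset (NZ n)}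
    (hY : Y ⊆ F.gens) (hadd : ∀ y ∈ Y, x + y ∈ F.gens) : Y.card ≤ 2 := by
  by_contra! h3
  obtain ⟨y₁, h₁, y₂, h₂, y₃, h₃, h12, h13, h23⟩ := Finset.two_lt_card.1 h3
  have key {y y' : NZ n} (hy : y ∈ Y) (hy' : y' ∈ Y) (hne : y ≠ y') :=
    hF.add_eq_neg_or_eq_neg_two_nsmul hx (hY hy) (hY hy') (hadd y hy) (hadd y' hy') hne
  have hsub : ({y₁ + y₂, y₁ + y₃, y₂ + y₃} : Finset (NZ n)) ⊆ {-x, -(2 • x)} := by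
    intro s hs
    simp only [Finset.mem_insert, Finset.mem_singleton] at hs ⊢
    rcases hs with rfl | rfl | rfl
    exacts [key h₁ h₂ h12, key h₁ h₃ h13, key h₂ h₃ h23]
  have hcard := Finset.card_le_card hsub
  rw [Finset.card_eq_three.2 ⟨_, _, _, fun h => h23 (add_left_cancel h),
    fun h => h13 (by linear_combination h), fun h => h12 (add_right_cancel h), rfl⟩] at hcard
  exact absurd (hcard.trans Finset.card_le_two) (by norm_num)

theorem card_le_three (hF : IsFano F) {x : NZ n} (hx : x ∈ F.gens) {Y : Finset (NZ n)}
    (hY : Y ⊆ F.gens) (hpair : ∀ y ∈ Y, ({x, y} : Finset (NZ n)) ∉ F.cones) : Y.card ≤ 3 := by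
  rw [← Finset.card_filter_add_card_filter_not (p := fun y => x + y = 0)]
  have h0 : (Y.filter (fun y => x + y = 0)).card ≤ 1 :=
    Finset.card_le_one.2 fun a ha b hb =>
      add_left_cancel ((Finset.mem_filter.1 ha).2.trans (Finset.mem_filter.1 hb).2.symm)
  have h1 : (Y.filter (fun y => ¬ x + y = 0)).card ≤ 2 :=
    hF.card_le_two hx ((Finset.filter_subset _ _).trans hY) fun y hy => by
      obtain ⟨hyY, hy0⟩ := Finset.mem_filter.1 hy
      exact (hF.add_eq_zero_or_mem_gens hx (hY hyY) (hpair y hyY)).resolve_left hy0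
  omega

end IsFano

namespace Refines

variable {FX FY : Fan n}

theorem mem_gens (href : Refines FX FY) {y : NZ n} (hy : y ∈ FY.gens) : y ∈ FX.gens := by
  obtain ⟨S, hS, hU⟩ := href {y} (FY.gens_mem y hy)
  have hmem {p : NQ n} (hp : p ∈ coneSpan {y}) : ∃ σ ∈ S, p ∈ coneSpan σ := by
    rw [hU] at hp; simpa using hp
  obtain ⟨σ, hσS, hyσ⟩ := hmem (toQ_mem_coneSpan (Finset.mem_singleton_self y))
  obtain ⟨v, hv⟩ : σ.Nonempty := by
    rw [Finset.nonempty_iff_ne_empty]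
    rintro rfl
    obtain ⟨c, -, hc⟩ := hyσ
    exact FY.ne_zero_of_mem_gens hy (toQ_injective (by simpa [toQ_zero] using hc))
  have hvX := FX.cones_subset σ (hS hσS) hv
  obtain ⟨c, hc, hvc⟩ : toQ v ∈ coneSpan {y} := by
    rw [hU]
    exact Set.mem_iUnion₂.2 ⟨σ, hσS, toQ_mem_coneSpan hv⟩
  rw [Finset.sum_singleton] at hvc
  rwa [← FX.eq_of_toQ_eq_smul FY hvX hy (hc y) hvc]

theorem insert_mem_cones (href : Refines FX FY) {x y : NZ n} {η : Finset (NZ n)}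
    (hη : η ∈ FY.cones) (hrel : toQ x ∈ relInt η) (hy : y ∈ FY.gens)
    (hxy : ({x, y} : Finset (NZ n)) ∈ FX.cones) : insert y η ∈ FY.cones := by
  obtain ⟨τ, hτ, hpτ⟩ := FY.complete (toQ (x + y))
  obtain ⟨S, hS, hU⟩ := href τ hτ
  obtain ⟨σ, hσS, hpσ⟩ : ∃ σ ∈ S, toQ (x + y) ∈ coneSpan σ := by
    rw [hU] at hpτ; simpa using hpτ
  have hsub := FX.subset_of_mem_relInt hxy (hS hσS) (toQ_add_mem_relInt_pair x y) hpσ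
  have hmem {v : NZ n} (hv : v ∈ ({x, y} : Finset (NZ n))) : toQ v ∈ coneSpan τ := by
    rw [hU]
    exact Set.mem_iUnion₂.2 ⟨σ, hσS, toQ_mem_coneSpan (hsub hv)⟩
  have hητ := FY.subset_of_mem_relInt hη hτ hrel (hmem (Finset.mem_insert_self x {y}))
  have hyτ := FY.mem_of_toQ_mem_coneSpan hy hτ (hmem (by simp))
  exact FY.downward τ hτ _ (Finset.insert_subset hyτ hητ)

end Refines

namespace Fan

variable (F : Fan n)

def picardNumber : ℤ := (F.gens.card : ℤ) - n

def orbitClosurePicardNumber (η : Finset (NZ n)) : ℤ :=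
  ((F.cones.filter (fun σ => η ⊆ σ ∧ σ.card = η.card + 1)).card : ℤ) - ((n : ℤ) - η.card)

theorem filter_cones_card_succ_eq_image (η : Finset (NZ n)) :
    F.cones.filter (fun σ => η ⊆ σ ∧ σ.card = η.card + 1) =
      (F.gens.filter fun y => y ∉ η ∧ insert y η ∈ F.cones).image (insert · η) := by
  ext σ
  simp only [Finset.mem_filter, Finset.mem_image]
  constructor
  · rintro ⟨hσ, hησ, hcard⟩
    obtain ⟨y, hyη, rfl⟩ := Finset.exists_eq_insert_iff.2 ⟨hησ, hcard.symm⟩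
    exact ⟨y, ⟨F.cones_subset _ hσ (Finset.mem_insert_self y η), hyη, hσ⟩, rfl⟩
  · rintro ⟨y, ⟨-, hyη, hσ⟩, rfl⟩
    exact ⟨hσ, Finset.subset_insert y η, Finset.card_insert_of_notMem hyη⟩

theorem picardNumber_sub_orbitClosurePicardNumber {η : Finset (NZ n)} (hη : η ∈ F.cones) :
    F.picardNumber - F.orbitClosurePicardNumber η =
      (F.gens.filter fun y => y ∉ η ∧ insert y η ∉ F.cones).card := by
  have hinj : Set.InjOn (insert · η) (F.gens.filter fun y => y ∉ η ∧ insert y η ∈ F.cones) :=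
    fun y hy y' _ h => by
      have hy' : y ∈ insert y' η :=
        (show insert y η = insert y' η from h) ▸ Finset.mem_insert_self y η
      exact (Finset.mem_insert.1 hy').resolve_right (Finset.mem_filter.1 hy).2.1
  have hpart := Finset.card_filter_add_card_filter_not (s := F.gens.filter (· ∉ η))
    (p := fun y => insert y η ∈ F.cones)
  rw [Finset.filter_filter, Finset.filter_filter, ← Finset.sdiff_eq_filter,
    Finset.card_sdiff_of_subset (F.cones_subset η hη)] at hpart
  have hle := Finset.card_le_card (F.cones_subset η hη)
  rw [picardNumber, orbitClosurePicardNumber, filter_cones_card_succ_eq_image,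
    Finset.card_image_of_injOn hinj]
  omega

end Fan

end

/-- Let the Fano fan `Σ_X` refine the smooth complete fan `Σ_Y` (an equivariant
birational morphism `f : X → Y`), let `x ∈ G(Σ_X)` lie in the relative interior of the
cone `η ∈ Σ_Y` of dimension `k`, so `f` maps `E = V(x)` onto `A = V(η)`. Then
`ρ_Y - ρ_A ≤ 3`, where `ρ_Y = #G(Σ_Y) - n` and
`ρ_A = #{(k+1)-cones of Σ_Y containing η} - (n-k)`. -/
theorem picard_drop_of_image {n : ℕ} (FX FY : Fan n)
    (hFano : IsFano FX) (href : Refines FX FY)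
    (x : NZ n) (hx : x ∈ FX.gens) (η : Finset (NZ n)) (hη : η ∈ FY.cones)
    (hrel : toQ x ∈ relInt η) :
    ((FY.gens.card : ℤ) - n) -
      (((FY.cones.filter (fun σ => η ⊆ σ ∧ σ.card = η.card + 1)).card : ℤ) -
        ((n : ℤ) - η.card)) ≤ 3 := by
  change FY.picardNumber - FY.orbitClosurePicardNumber η ≤ 3
  rw [FY.picardNumber_sub_orbitClosurePicardNumber hη]
  have hcard := hFano.card_le_three hx
    (Y := FY.gens.filter fun y => y ∉ η ∧ insert y η ∉ FY.cones)
    (fun y hy => href.mem_gens (Finset.mem_filter.1 hy).1)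
    (fun y hy hxy => (Finset.mem_filter.1 hy).2.2
      (href.insert_mem_cones hη hrel (Finset.mem_filter.1 hy).1 hxy))
  exact_mod_cast hcard

end ToricFano
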